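/- For the semi-discrete scheme Δx_i dU_i/dt = -(F_{i+1/2} - F_{i-1/2}) with F_{i+1/2} = A_{i+1/2}^+ U_{i+1/2,-} - A_{i+1/2}^- U_{i+1/2,+} and zero-flux boundary conditions, the discrete relative entropy E_Δ(t) = Σ_i Δx_i [H(U_i) - H(U_i^{eq}) - h(U_i^{eq})(U_i - U_i^{eq})] satisfies dE_Δ/dt ≤ -Σ_i Δx_{i+1/2} |A_{i+1/2}|² min(U_{i+1/2,-}, U_{i+1/2,+}), where A_{i+1/2} = -[V_{i+1} - V_i + h(U_{i+1}) - h(U_i)]/Δx_{i+1/2} and (U_i^{eq}) satisfies the discrete equilibrium relation h(U_{i+1}^{eq}) - h(U_i^{eq}) = -(V_{i+1} - V_i). -/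

import Mathlib

/-!
Along the scheme, `dE_Δ/dt = Σ_i (h(U_i) - h(U_i^eq)) Δx_i dU_i/dt`, and the scheme turns this into
`-Σ_i (h(U_i) - h(U_i^eq)) (F_{i+1/2} - F_{i-1/2})`. Summing by parts (the boundary fluxes vanish)
and using the equilibrium relation, the jump of `h(U) - h(U^eq)` across the interface `i+1/2` is
`-Δx_{i+1/2} A_{i+1/2}`, so `dE_Δ/dt = -Σ_i Δx_{i+1/2} A_{i+1/2} F_{i+1/2}`. Finally the upwind flux
satisfies `A F ≥ A² min(U_-, U_+)` interface by interface.
-/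

open Finset

theorem sum_range_mul_sub_eq_neg_sum {R : Type*} [CommRing R] (g F : ℕ → R) (N : ℕ)
    (h0 : F 0 = 0) (hN : F (N + 1) = 0) :
    ∑ i ∈ range (N + 1), g i * (F (i + 1) - F i)
      = -∑ i ∈ range N, (g (i + 1) - g i) * F (i + 1) := by
  have by_parts : ∀ n, ∑ i ∈ range (n + 1), g i * (F (i + 1) - F i)
      = g n * F (n + 1) - g 0 * F 0 - ∑ i ∈ range n, (g (i + 1) - g i) * F (i + 1) := by
    intro n
    induction n with
    | zero => simp; ring
    | succ n ih => rw [sum_range_succ, ih, sum_range_succ]; ring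
  rw [by_parts, h0, hN]
  ring

theorem HasDerivAt.bregman_comp {H h u : ℝ → ℝ} {c u' t : ℝ}
    (hH : HasDerivAt H (h (u t)) (u t)) (hu : HasDerivAt u u' t) :
    HasDerivAt (fun s => H (u s) - H c - h c * (u s - c)) ((h (u t) - h c) * u') t := by
  have := ((hH.comp t hu).sub_const (H c)).sub ((hu.sub_const c).const_mul (h c))
  exact this.congr_deriv (by ring)

def upwindFlux (A a b : ℝ) : ℝ := max A 0 * a - max (-A) 0 * b

theorem sq_mul_min_le_mul_upwindFlux (A a b : ℝ) : A ^ 2 * min a b ≤ A * upwindFlux A a b := by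
  have hsq := sq_nonneg A
  rcases le_total 0 A with hA | hA
  · have : A * upwindFlux A a b = A ^ 2 * a := by
      rw [upwindFlux, max_eq_left hA, max_eq_right (neg_nonpos.mpr hA)]; ring
    rw [this]
    exact mul_le_mul_of_nonneg_left (min_le_left a b) hsq
  · have : A * upwindFlux A a b = A ^ 2 * b := by
      rw [upwindFlux, max_eq_right hA, max_eq_left (neg_nonneg.mpr hA)]; ring
    rw [this]
    exact mul_le_mul_of_nonneg_left (min_le_right a b) hsq

theorem semidiscrete_entropy_dissipation_general
    (N : ℕ) (t : ℝ)
    (Δx Δxh : ℕ → ℝ)          -- cell sizes Δx_i and interface distances Δx_{i+1/2}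
    (V Ueq : ℕ → ℝ)           -- potential values and discrete equilibrium
    (H h : ℝ → ℝ)
    (U U' : ℕ → ℝ → ℝ)        -- cell values and their time derivatives
    (Um Up : ℕ → ℝ → ℝ)       -- slope-limited reconstructions U_{i+1/2,-}, U_{i+1/2,+}
    (F : ℕ → ℝ → ℝ)           -- fluxes, F j = F_{j-1/2} at the interfaces j = 0,…,N+1
    (hΔxh : ∀ i, 0 < Δxh i)
    (hH : ∀ s > (0:ℝ), HasDerivAt H (h s) s)
    (hUpos : ∀ i ≤ N, 0 < U i t)
    -- zero-flux boundary conditions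
    (hF0 : ∀ s, F 0 s = 0) (hFN : ∀ s, F (N + 1) s = 0)
    -- interior upwind fluxes with velocity A_{i+1/2}
    (hFint : ∀ i < N, ∀ s : ℝ,
        F (i + 1) s =
          (max (-(V (i + 1) - V i + h (U (i + 1) s) - h (U i s)) / Δxh i) 0) * Um i s
          - (max (-(-(V (i + 1) - V i + h (U (i + 1) s) - h (U i s)) / Δxh i)) 0) * Up i s)
    -- semi-discrete scheme
    (hscheme : ∀ i ≤ N, HasDerivAt (U i) (U' i t) t ∧
        Δx i * U' i t = -(F (i + 1) t - F i t))
    -- discrete equilibrium relation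
    (heq : ∀ i < N, h (Ueq (i + 1)) - h (Ueq i) = -(V (i + 1) - V i))
    -- the discrete relative entropy is differentiable at t with derivative E'
    (E' : ℝ)
    (hE : HasDerivAt (fun s => ∑ i ∈ Finset.range (N + 1),
        Δx i * (H (U i s) - H (Ueq i) - h (Ueq i) * (U i s - Ueq i))) E' t) :
    E' ≤ -∑ i ∈ Finset.range N,
        Δxh i * (-(V (i + 1) - V i + h (U (i + 1) t) - h (U i t)) / Δxh i) ^ 2
          * min (Um i t) (Up i t) := by
  set A : ℕ → ℝ := fun i => -(V (i + 1) - V i + h (U (i + 1) t) - h (U i t)) / Δxh i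
  set g : ℕ → ℝ := fun i => h (U i t) - h (Ueq i)
  have hE' : E' = ∑ i ∈ range (N + 1), g i * (Δx i * U' i t) := by
    refine hE.unique (HasDerivAt.fun_sum fun i hi => ?_)
    have hi : i ≤ N := Nat.lt_succ_iff.mp (mem_range.mp hi)
    exact (((hH _ (hUpos i hi)).bregman_comp (hscheme i hi).1).const_mul (Δx i)).congr_deriv
      (by ring)
  have hjump : ∀ i < N, g (i + 1) - g i = -(Δxh i * A i) := fun i hi => by
    have := mul_div_cancel₀ (-(V (i + 1) - V i + h (U (i + 1) t) - h (U i t))) (hΔxh i).ne'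
    simp only [g, A]
    linarith [heq i hi]
  have hflux : E' = -∑ i ∈ range (N + 1), g i * (F (i + 1) t - F i t) := by
    rw [hE', ← sum_neg_distrib]
    refine sum_congr rfl fun i hi => ?_
    rw [(hscheme i (Nat.lt_succ_iff.mp (mem_range.mp hi))).2, mul_neg]
  calc E' = -∑ i ∈ range N, Δxh i * (A i * upwindFlux (A i) (Um i t) (Up i t)) := by
        rw [hflux, sum_range_mul_sub_eq_neg_sum g (F · t) N (hF0 t) (hFN t), neg_neg,
          ← sum_neg_distrib]
        refine sum_congr rfl fun i hi => ?_
        rw [hjump i (mem_range.mp hi), hFint i (mem_range.mp hi), upwindFlux]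
        ring
    _ ≤ -∑ i ∈ range N, Δxh i * A i ^ 2 * min (Um i t) (Up i t) := by
        refine neg_le_neg (sum_le_sum fun i _ => ?_)
        rw [mul_assoc]
        exact mul_le_mul_of_nonneg_left (sq_mul_min_le_mul_upwindFlux _ _ _) (hΔxh i).le

/-- Semi-discrete entropy dissipation estimate: along the semi-discrete scheme with
zero-flux boundary conditions, the discrete relative entropy is dissipated at a rate
controlled by `Σ Δx_{i+1/2} |A_{i+1/2}|² min(U_{i+1/2,-}, U_{i+1/2,+})`. -/
theorem semidiscrete_entropy_dissipation
    (N : ℕ) (t : ℝ)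
    (Δx Δxh : ℕ → ℝ)          -- cell sizes Δx_i and interface distances Δx_{i+1/2}
    (V Ueq : ℕ → ℝ)           -- potential values and discrete equilibrium
    (H h : ℝ → ℝ)
    (U U' : ℕ → ℝ → ℝ)        -- cell values and their time derivatives
    (Um Up : ℕ → ℝ → ℝ)       -- slope-limited reconstructions U_{i+1/2,-}, U_{i+1/2,+}
    (F : ℕ → ℝ → ℝ)           -- fluxes, F j = F_{j-1/2} at the interfaces j = 0,…,N+1
    (hΔx : ∀ i, 0 < Δx i) (hΔxh : ∀ i, 0 < Δxh i)
    (hH : ∀ s > (0:ℝ), HasDerivAt H (h s) s)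
    (hmono : StrictMonoOn h (Set.Ioi 0))
    (hUpos : ∀ i ≤ N, 0 < U i t)
    (hUeqpos : ∀ i ≤ N, 0 < Ueq i)
    (hUm : ∀ i < N, 0 ≤ Um i t) (hUp : ∀ i < N, 0 ≤ Up i t)
    -- zero-flux boundary conditions
    (hF0 : ∀ s, F 0 s = 0) (hFN : ∀ s, F (N + 1) s = 0)
    -- interior upwind fluxes with velocity A_{i+1/2}
    (hFint : ∀ i < N, ∀ s : ℝ,
        F (i + 1) s =
          (max (-(V (i + 1) - V i + h (U (i + 1) s) - h (U i s)) / Δxh i) 0) * Um i s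
          - (max (-(-(V (i + 1) - V i + h (U (i + 1) s) - h (U i s)) / Δxh i)) 0) * Up i s)
    -- semi-discrete scheme
    (hscheme : ∀ i ≤ N, HasDerivAt (U i) (U' i t) t ∧
        Δx i * U' i t = -(F (i + 1) t - F i t))
    -- discrete equilibrium relation
    (heq : ∀ i < N, h (Ueq (i + 1)) - h (Ueq i) = -(V (i + 1) - V i))
    -- the discrete relative entropy is differentiable at t with derivative E'
    (E' : ℝ)
    (hE : HasDerivAt (fun s => ∑ i ∈ Finset.range (N + 1),
        Δx i * (H (U i s) - H (Ueq i) - h (Ueq i) * (U i s - Ueq i))) E' t) :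
    E' ≤ -∑ i ∈ Finset.range N,
        Δxh i * (-(V (i + 1) - V i + h (U (i + 1) t) - h (U i t)) / Δxh i) ^ 2
          * min (Um i t) (Up i t) :=
  semidiscrete_entropy_dissipation_general N t Δx Δxh V Ueq H h U U' Um Up F hΔxh hH hUpos hF0 hFN
    hFint hscheme heq E' hE
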